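/- Let h(u,v,w) = u·v·w·((u³+v³+w³)³ − 27u³v³w³) ∈ ℂ[u,v,w] be the defining polynomial of the Hesse line arrangement, let h'(u,v,w) = h(vw, uw, uv), and set ℓ₁ = x+ωy+ω²z, ℓ₂ = x+ω²y+ωz, ℓ₃ = x+y+z. Then there exists a nonzero constant c ∈ ℂ such that ∏_{j=1}^{12} f_j(1)(x,y,z) = c · h'(ℓ₁, ℓ₂, ℓ₃) = c · h(ℓ₂ℓ₃, ℓ₁ℓ₃, ℓ₁ℓ₂) in ℂ[x,y,z]; that is, the degree-24 non-reduced Hesse conic multiarrangement at λ = 1 is, up to a linear change of coordinates, the pull-back of the Hesse line arrangement under the standard Cremona map (u:v:w) ↦ (vw:uw:uv). -/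

import Mathlib

/-!
Since `ω² + ω + 1 = 0`, the Hesse polynomial splits into linear forms:
`(u³+v³+w³)³ − 27u³v³w³` is the product of the three cubics `u³ + v³ + (ωᵏw)³ − 3uv(ωᵏw)`,
and each cubic `u³ + v³ + w³ − 3uvw` is `(u+v+w)(u+ωv+ω²w)(u+ω²v+ωw)`.
On the Cremona image `(u, v, w) = (ℓ₂ℓ₃, ℓ₁ℓ₃, ℓ₁ℓ₂)` the factor `uvw = (ℓ₁ℓ₂ℓ₃)²` is
`f₁(1) f₂(1) f₁₂(1)`, because `f₁(1) = ℓ₁²`, `f₂(1) = ℓ₂²`, `f₁₂(1) = ℓ₃²`, and each of the nine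
linear forms `u + ωⁱv + ωʲw` becomes a nonzero multiple of one of the conics `f₃(1), …, f₁₁(1)`.
The nine multipliers have product `3⁶ = 729`.
-/

open MvPolynomial

set_option maxHeartbeats 1000000

/-- The twelve conics `Q_j(λ) : f_j(λ) = 0` of the Hesse arrangement of conics,
as quadratic forms in `ℂ[x,y,z]` (variables `X 0 = x`, `X 1 = y`, `X 2 = z`),
depending on the parameter `lam = λ` and on a primitive cube root of unity `ω`.
The index `j : Fin 12` corresponds to `f_{j+1}(λ)` of the paper. -/
noncomputable def hesseConic (ω lam : ℂ) : Fin 12 → MvPolynomial (Fin 3) ℂ :=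
  ![X 0 ^ 2 + C (lam + 1) * (C ω * (X 0 * X 1) + C (ω ^ 2) * (X 0 * X 2) + X 1 * X 2)
      + C (ω ^ 2) * X 1 ^ 2 + C ω * X 2 ^ 2,
    X 0 ^ 2 + C (lam + 1) * (C (ω ^ 2) * (X 0 * X 1) + C ω * (X 0 * X 2) + X 1 * X 2)
      + C ω * X 1 ^ 2 + C (ω ^ 2) * X 2 ^ 2,
    X 0 * X 1 - C lam * X 2 ^ 2,
    X 0 ^ 2 + C (ω * lam + 1) * (X 0 * X 1 + C ω * (X 0 * X 2) + C ω * (X 1 * X 2))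
      + X 1 ^ 2 + C (ω ^ 2) * X 2 ^ 2,
    X 0 ^ 2 + C (ω ^ 2 * lam + 1) *
        (X 0 * X 1 + C (ω ^ 2) * (X 0 * X 2) + C (ω ^ 2) * (X 1 * X 2))
      + X 1 ^ 2 + C ω * X 2 ^ 2,
    X 0 ^ 2 + C (ω * lam + ω ^ 2) * (X 0 * X 1 + X 1 * X 2 + C ω * (X 0 * X 2))
      + C ω * X 1 ^ 2 + X 2 ^ 2,
    - (C lam) * X 1 ^ 2 + X 0 * X 2,
    X 0 ^ 2 + C (ω ^ 2 * lam + ω) * (X 0 * X 1 + X 1 * X 2 + C (ω ^ 2) * (X 0 * X 2))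
      + C (ω ^ 2) * X 1 ^ 2 + X 2 ^ 2,
    X 0 ^ 2 + C (lam + ω ^ 2) * (X 0 * X 1 + X 0 * X 2 + C (ω ^ 2) * (X 1 * X 2))
      + C ω * X 1 ^ 2 + C ω * X 2 ^ 2,
    X 0 ^ 2 + C (lam + ω) * (X 0 * X 1 + X 0 * X 2 + C ω * (X 1 * X 2))
      + C (ω ^ 2) * (X 1 ^ 2 + X 2 ^ 2),
    C lam * X 0 ^ 2 - X 1 * X 2,
    X 0 ^ 2 + C (lam + 1) * (X 0 * X 1 + X 0 * X 2 + X 1 * X 2) + X 1 ^ 2 + X 2 ^ 2]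

/-- Representative vectors in `ℂ³` of the nine points `p_k(λ)` of `𝒫₉(λ)`;
the index `k : Fin 9` corresponds to `p_{k+1}(λ)` of the paper. -/
noncomputable def hessePoint (ω lam : ℂ) : Fin 9 → Fin 3 → ℂ :=
  ![![lam, 1, 1], ![1, lam, 1], ![1, 1, lam],
    ![lam, ω, ω ^ 2], ![ω ^ 2, lam, ω], ![ω, ω ^ 2, lam],
    ![lam, ω ^ 2, ω], ![ω, lam, ω ^ 2], ![ω ^ 2, ω, lam]]

/-- The set `Λ = ℂ ∖ {−2, −2ω, −2ω², 0, 1, ω, ω²}` of regular parameter values. -/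
def hesseLambda (ω : ℂ) : Set ℂ :=
  {lam | lam ∉ ({-2, -2 * ω, -2 * ω ^ 2, 0, 1, ω, ω ^ 2} : Set ℂ)}

/-- The defining polynomial `h(u,v,w) = uvw((u³+v³+w³)³ − 27u³v³w³)` of the Hesse line
arrangement, evaluated on arbitrary arguments `u, v, w`. -/
noncomputable def hesseLinePoly (u v w : MvPolynomial (Fin 3) ℂ) :
    MvPolynomial (Fin 3) ℂ :=
  u * v * w * ((u ^ 3 + v ^ 3 + w ^ 3) ^ 3 - 27 * (u ^ 3 * v ^ 3 * w ^ 3))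

section CubeRootOfUnity

variable {R : Type*} [CommRing R] {ω : R}

theorem map_sq_add_add_one_eq_zero {S : Type*} [CommRing S] (f : R →+* S)
    (hω : ω ^ 2 + ω + 1 = 0) : f ω ^ 2 + f ω + 1 = 0 := by
  rw [← map_pow, ← map_add, ← map_one f, ← map_add, hω, map_zero]

theorem pow_three_sub_pow_three_eq_mul (hω : ω ^ 2 + ω + 1 = 0) (s t : R) :
    s ^ 3 - t ^ 3 = (s - t) * (s - ω * t) * (s - ω ^ 2 * t) := by
  linear_combination (s - t) * (s * t - (ω - 1) * t ^ 2) * hω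

theorem add_pow_three_sub_mul_eq_mul (hω : ω ^ 2 + ω + 1 = 0) (u v w : R) :
    u ^ 3 + v ^ 3 + w ^ 3 - 3 * (u * v * w) =
      (u + v + w) * (u + ω * v + ω ^ 2 * w) * (u + ω ^ 2 * v + ω * w) := by
  grind

theorem hesse_cubic_factorization (hω : ω ^ 2 + ω + 1 = 0) (u v w : R) :
    (u ^ 3 + v ^ 3 + w ^ 3) ^ 3 - 27 * (u ^ 3 * v ^ 3 * w ^ 3) =
      (u ^ 3 + v ^ 3 + w ^ 3 - 3 * (u * v * w)) *
        ((u ^ 3 + v ^ 3 + (ω * w) ^ 3 - 3 * (u * v * (ω * w))) *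
          (u ^ 3 + v ^ 3 + (ω ^ 2 * w) ^ 3 - 3 * (u * v * (ω ^ 2 * w)))) := by
  have hω3 : ω ^ 3 = 1 := by linear_combination (ω - 1) * hω
  have hωw : (ω * w) ^ 3 = w ^ 3 := by rw [mul_pow, hω3, one_mul]
  have hω2w : (ω ^ 2 * w) ^ 3 = w ^ 3 := by
    rw [mul_pow, ← pow_mul, pow_mul', hω3, one_pow, one_mul]
  rw [hωw, hω2w]
  linear_combination pow_three_sub_pow_three_eq_mul hω (u ^ 3 + v ^ 3 + w ^ 3) (3 * (u * v * w))

end CubeRootOfUnity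

section Cremona

variable {ω : ℂ}

local notation "ℓ₁" => (X 0 + C ω * X 1 + C (ω ^ 2) * X 2 : MvPolynomial (Fin 3) ℂ)
local notation "ℓ₂" => (X 0 + C (ω ^ 2) * X 1 + C ω * X 2 : MvPolynomial (Fin 3) ℂ)
local notation "ℓ₃" => (X 0 + X 1 + X 2 : MvPolynomial (Fin 3) ℂ)

theorem cremona_mul_eq_hesseConic_mul (hω : ω ^ 2 + ω + 1 = 0) :
    ℓ₂ * ℓ₃ * (ℓ₁ * ℓ₃) * (ℓ₁ * ℓ₂) =
      hesseConic ω 1 0 * hesseConic ω 1 1 * hesseConic ω 1 11 := by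
  have hC := map_sq_add_add_one_eq_zero (C : ℂ →+* MvPolynomial (Fin 3) ℂ) hω
  obtain ⟨h₀, h₁, h₁₁⟩ :
      hesseConic ω 1 0 = ℓ₁ ^ 2 ∧ hesseConic ω 1 1 = ℓ₂ ^ 2 ∧ hesseConic ω 1 11 = ℓ₃ ^ 2 := by
    refine ⟨?_, ?_, ?_⟩ <;>
      simp only [hesseConic, Matrix.cons_val, map_add, map_mul, map_pow, map_one] <;> grind
  rw [h₀, h₁, h₁₁]
  ring

theorem cremona_cubic_eq_hesseConic_mul (hω : ω ^ 2 + ω + 1 = 0) :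
    (ℓ₂ * ℓ₃) ^ 3 + (ℓ₁ * ℓ₃) ^ 3 + (ℓ₁ * ℓ₂) ^ 3 - 3 * (ℓ₂ * ℓ₃ * (ℓ₁ * ℓ₃) * (ℓ₁ * ℓ₂)) =
      27 * (hesseConic ω 1 2 * hesseConic ω 1 6 * hesseConic ω 1 10) := by
  have hC := map_sq_add_add_one_eq_zero (C : ℂ →+* MvPolynomial (Fin 3) ℂ) hω
  have hκ : 3 * (-3 * C ω ^ 2) * (-3 * C ω) = (27 : MvPolynomial (Fin 3) ℂ) := by
    linear_combination 27 * (C ω - 1) * hC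
  obtain ⟨h₁₀, h₆, h₂⟩ :
      ℓ₂ * ℓ₃ + ℓ₁ * ℓ₃ + ℓ₁ * ℓ₂ = 3 * hesseConic ω 1 10 ∧
      ℓ₂ * ℓ₃ + C ω * (ℓ₁ * ℓ₃) + C ω ^ 2 * (ℓ₁ * ℓ₂) = -3 * C ω ^ 2 * hesseConic ω 1 6 ∧
      ℓ₂ * ℓ₃ + C ω ^ 2 * (ℓ₁ * ℓ₃) + C ω * (ℓ₁ * ℓ₂) = -3 * C ω * hesseConic ω 1 2 := by
    refine ⟨?_, ?_, ?_⟩ <;>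
      simp only [hesseConic, Matrix.cons_val, map_add, map_mul, map_pow, map_one] <;> grind
  rw [add_pow_three_sub_mul_eq_mul hC, h₁₀, h₆, h₂]
  linear_combination (hesseConic ω 1 2 * hesseConic ω 1 6 * hesseConic ω 1 10) * hκ

theorem cremona_cubic_mul_eq_hesseConic_mul (hω : ω ^ 2 + ω + 1 = 0) :
    ((ℓ₂ * ℓ₃) ^ 3 + (ℓ₁ * ℓ₃) ^ 3 + (C ω * (ℓ₁ * ℓ₂)) ^ 3 -
        3 * (ℓ₂ * ℓ₃ * (ℓ₁ * ℓ₃) * (C ω * (ℓ₁ * ℓ₂)))) *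
      ((ℓ₂ * ℓ₃) ^ 3 + (ℓ₁ * ℓ₃) ^ 3 + (C ω ^ 2 * (ℓ₁ * ℓ₂)) ^ 3 -
        3 * (ℓ₂ * ℓ₃ * (ℓ₁ * ℓ₃) * (C ω ^ 2 * (ℓ₁ * ℓ₂)))) =
      27 * (hesseConic ω 1 3 * hesseConic ω 1 4 * hesseConic ω 1 5 *
        hesseConic ω 1 7 * hesseConic ω 1 8 * hesseConic ω 1 9) := by
  have hC := map_sq_add_add_one_eq_zero (C : ℂ →+* MvPolynomial (Fin 3) ℂ) hω
  have hκ : (2 + C ω) * (2 + C ω) * (-1 - 2 * C ω) * ((1 - C ω) * (1 + 2 * C ω) * (1 - C ω)) =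
      (27 : MvPolynomial (Fin 3) ℂ) := by
    grind
  obtain ⟨h₈, h₇, h₃, h₉, h₅, h₄⟩ :
      ℓ₂ * ℓ₃ + ℓ₁ * ℓ₃ + C ω * (ℓ₁ * ℓ₂) = (2 + C ω) * hesseConic ω 1 8 ∧
      ℓ₂ * ℓ₃ + C ω * (ℓ₁ * ℓ₃) + C ω ^ 2 * (C ω * (ℓ₁ * ℓ₂)) = (2 + C ω) * hesseConic ω 1 7 ∧
      ℓ₂ * ℓ₃ + C ω ^ 2 * (ℓ₁ * ℓ₃) + C ω * (C ω * (ℓ₁ * ℓ₂)) =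
        (-1 - 2 * C ω) * hesseConic ω 1 3 ∧
      ℓ₂ * ℓ₃ + ℓ₁ * ℓ₃ + C ω ^ 2 * (ℓ₁ * ℓ₂) = (1 - C ω) * hesseConic ω 1 9 ∧
      ℓ₂ * ℓ₃ + C ω * (ℓ₁ * ℓ₃) + C ω ^ 2 * (C ω ^ 2 * (ℓ₁ * ℓ₂)) =
        (1 + 2 * C ω) * hesseConic ω 1 5 ∧
      ℓ₂ * ℓ₃ + C ω ^ 2 * (ℓ₁ * ℓ₃) + C ω * (C ω ^ 2 * (ℓ₁ * ℓ₂)) =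
        (1 - C ω) * hesseConic ω 1 4 := by
    refine ⟨?_, ?_, ?_, ?_, ?_, ?_⟩ <;>
      simp only [hesseConic, Matrix.cons_val, map_add, map_mul, map_pow, map_one] <;> grind
  rw [add_pow_three_sub_mul_eq_mul hC, add_pow_three_sub_mul_eq_mul hC, h₈, h₇, h₃, h₉, h₅, h₄]
  linear_combination (hesseConic ω 1 3 * hesseConic ω 1 4 * hesseConic ω 1 5 *
    hesseConic ω 1 7 * hesseConic ω 1 8 * hesseConic ω 1 9) * hκ

theorem hesseLinePoly_cremona (hω : ω ^ 2 + ω + 1 = 0) :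
    hesseLinePoly (ℓ₂ * ℓ₃) (ℓ₁ * ℓ₃) (ℓ₁ * ℓ₂) = 729 * ∏ j, hesseConic ω 1 j := by
  rw [hesseLinePoly, hesse_cubic_factorization (map_sq_add_add_one_eq_zero C hω),
    cremona_cubic_eq_hesseConic_mul hω, cremona_cubic_mul_eq_hesseConic_mul hω,
    cremona_mul_eq_hesseConic_mul hω]
  simp only [Fin.prod_univ_succ, Fin.prod_univ_zero, Fin.reduceSucc]
  ring

end Cremona

/-- Let `h` be the defining polynomial of the Hesse line arrangement,
`h'(u,v,w) = h(vw, uw, uv)` its Cremona pull-back, and `ℓ₁ = x+ωy+ω²z`,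
`ℓ₂ = x+ω²y+ωz`, `ℓ₃ = x+y+z`. Then there is a nonzero constant `c ∈ ℂ` with
`∏_{j=1}^{12} f_j(1) = c·h'(ℓ₁,ℓ₂,ℓ₃) = c·h(ℓ₂ℓ₃, ℓ₁ℓ₃, ℓ₁ℓ₂)` in `ℂ[x,y,z]`:
the degree-24 non-reduced Hesse conic multiarrangement at `λ = 1` is, up to a linear
change of coordinates, the pull-back of the Hesse line arrangement under the standard
Cremona map `(u:v:w) ↦ (vw:uw:uv)`. -/
theorem stmt_17 (ω : ℂ) (hω : ω ^ 2 + ω + 1 = 0) :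
    ∃ c : ℂ, c ≠ 0 ∧
      (∏ j : Fin 12, hesseConic ω 1 j) =
        C c *
          hesseLinePoly
            ((X 0 + C (ω ^ 2) * X 1 + C ω * X 2) * (X 0 + X 1 + X 2))
            ((X 0 + C ω * X 1 + C (ω ^ 2) * X 2) * (X 0 + X 1 + X 2))
            ((X 0 + C ω * X 1 + C (ω ^ 2) * X 2) *
              (X 0 + C (ω ^ 2) * X 1 + C ω * X 2)) := by
  refine ⟨729⁻¹, by norm_num, ?_⟩
  rw [hesseLinePoly_cremona hω, ← mul_assoc, ← map_ofNat C 729, ← map_mul,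
    inv_mul_cancel₀ (by norm_num), map_one, one_mul]
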